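/- Every deterministic classical strategy for the game G'_{C5} wins with probability at most 10/13: for every family of functions f_i : {0,1} → {0,1} (i ∈ ZMod 5), the total probability weight of the questions of G'_{C5} that are lost is at least 3/13. -/

import Mathlib

/-- The strategy `f` wins the question `Q_a` of `G'_{C5}` (all inputs 1). -/
abbrev winsQa (f : ZMod 5 → ZMod 2 → ZMod 2) : Prop :=
  (∑ i : ZMod 5, f i 1) = 1

/-- The strategy `f` wins the question `Q_i` of `G'_{C5}` (player `i` gets
input 1, the others 0). -/
abbrev winsQi (f : ZMod 5 → ZMod 2 → ZMod 2) (i : ZMod 5) : Prop :=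
  f (i - 1) 0 + f i 1 + f (i + 1) 0 = 0

/-- The strategy `f` wins the question `Q'_i` of `G'_{C5}` (players `i-1` and
`i+1` get input 1, the others 0; the predicate is on all players except `i`). -/
abbrev winsQi' (f : ZMod 5 → ZMod 2 → ZMod 2) (i : ZMod 5) : Prop :=
  (∑ j ∈ Finset.univ.erase i,
    f j (if j = i - 1 ∨ j = i + 1 then (1 : ZMod 2) else 0)) = 0

lemma hQa (f : ZMod 5 → ZMod 2 → ZMod 2) :
    winsQa f ↔ f 0 1 + f 1 1 + f 2 1 + f 3 1 + f 4 1 = 1 := by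
  unfold winsQa
  rw [show (∑ i : ZMod 5, f i 1) = ∑ i : Fin 5, f i 1 from rfl, Fin.sum_univ_five]
  exact Iff.rfl

lemma hQ (f : ZMod 5 → ZMod 2 → ZMod 2) :
    (winsQi f 0 ↔ f 4 0 + f 0 1 + f 1 0 = 0) ∧
    (winsQi f 1 ↔ f 0 0 + f 1 1 + f 2 0 = 0) ∧
    (winsQi f 2 ↔ f 1 0 + f 2 1 + f 3 0 = 0) ∧
    (winsQi f 3 ↔ f 2 0 + f 3 1 + f 4 0 = 0) ∧
    (winsQi f 4 ↔ f 3 0 + f 4 1 + f 0 0 = 0) := by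
  unfold winsQi
  refine ⟨?_, ?_, ?_, ?_, ?_⟩ <;>
    simp only [show ((-1) : ZMod 5) = 4 from by decide,
      show ((0:ZMod 5) - 1) = 4 from by decide, show ((0:ZMod 5) + 1) = 1 from by decide,
      show ((1:ZMod 5) - 1) = 0 from by decide, show ((1:ZMod 5) + 1) = 2 from by decide,
      show ((2:ZMod 5) - 1) = 1 from by decide, show ((2:ZMod 5) + 1) = 3 from by decide,
      show ((3:ZMod 5) - 1) = 2 from by decide, show ((3:ZMod 5) + 1) = 4 from by decide,
      show ((4:ZMod 5) - 1) = 3 from by decide, show ((4:ZMod 5) + 1) = 0 from by decide]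

lemma hQ'aux (f : ZMod 5 → ZMod 2 → ZMod 2) (i : ZMod 5) (s : Finset (ZMod 5))
    (hs : Finset.univ.erase i = s) :
    winsQi' f i ↔
      (∑ j ∈ s, f j (if j = i - 1 ∨ j = i + 1 then (1 : ZMod 2) else 0)) = 0 := by
  unfold winsQi'; rw [hs]

lemma hQ0' (f : ZMod 5 → ZMod 2 → ZMod 2) :
    winsQi' f 0 ↔ f 1 1 + (f 2 0 + (f 3 0 + f 4 1)) = 0 := by
  rw [hQ'aux f 0 {1,2,3,4} (by decide), Finset.sum_insert (by decide),
    Finset.sum_insert (by decide), Finset.sum_insert (by decide), Finset.sum_singleton]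
  simp (config := { decide := true })

lemma hQ1' (f : ZMod 5 → ZMod 2 → ZMod 2) :
    winsQi' f 1 ↔ f 0 1 + (f 2 1 + (f 3 0 + f 4 0)) = 0 := by
  rw [hQ'aux f 1 {0,2,3,4} (by decide), Finset.sum_insert (by decide),
    Finset.sum_insert (by decide), Finset.sum_insert (by decide), Finset.sum_singleton]
  simp (config := { decide := true })

lemma hQ2' (f : ZMod 5 → ZMod 2 → ZMod 2) :
    winsQi' f 2 ↔ f 0 0 + (f 1 1 + (f 3 1 + f 4 0)) = 0 := by
  rw [hQ'aux f 2 {0,1,3,4} (by decide), Finset.sum_insert (by decide),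
    Finset.sum_insert (by decide), Finset.sum_insert (by decide), Finset.sum_singleton]
  simp (config := { decide := true })

lemma hQ3' (f : ZMod 5 → ZMod 2 → ZMod 2) :
    winsQi' f 3 ↔ f 0 0 + (f 1 0 + (f 2 1 + f 4 1)) = 0 := by
  rw [hQ'aux f 3 {0,1,2,4} (by decide), Finset.sum_insert (by decide),
    Finset.sum_insert (by decide), Finset.sum_insert (by decide), Finset.sum_singleton]
  simp (config := { decide := true })

lemma hQ4' (f : ZMod 5 → ZMod 2 → ZMod 2) :
    winsQi' f 4 ↔ f 0 1 + (f 1 0 + (f 2 0 + f 3 1)) = 0 := by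
  rw [hQ'aux f 4 {0,1,2,3} (by decide), Finset.sum_insert (by decide),
    Finset.sum_insert (by decide), Finset.sum_insert (by decide), Finset.sum_singleton]
  simp (config := { decide := true })

set_option maxRecDepth 4000 in
lemma keyN : ∀ (a0 a1 a2 a3 a4 b0 b1 b2 b3 b4 : ZMod 2),
    3 ≤ 3 * (if b0 + b1 + b2 + b3 + b4 = 1 then 0 else 1)
      + ((if a4 + b0 + a1 = 0 then 0 else 1) + (if a0 + b1 + a2 = 0 then 0 else 1)
        + (if a1 + b2 + a3 = 0 then 0 else 1) + (if a2 + b3 + a4 = 0 then 0 else 1)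
        + (if a3 + b4 + a0 = 0 then 0 else 1))
      + ((if b1 + (a2 + (a3 + b4)) = 0 then 0 else 1)
        + (if b0 + (b2 + (a3 + a4)) = 0 then 0 else 1)
        + (if a0 + (b1 + (b3 + a4)) = 0 then 0 else 1)
        + (if a0 + (a1 + (b2 + b4)) = 0 then 0 else 1)
        + (if b0 + (a1 + (a2 + b3)) = 0 then 0 else 1)) := by decide

lemma cast01 (p : Prop) [Decidable p] :
    (if p then (0 : ℝ) else 1) = ((if p then 0 else 1 : ℕ) : ℝ) := by
  split <;> simp

open Classical in
/-- Every deterministic classical strategy loses questions of `G'_{C5}` of total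
probability weight at least `3/13` (so wins with probability at most `10/13`). -/
theorem gC5'_deterministic_losing_weight
    (f : ZMod 5 → ZMod 2 → ZMod 2) :
    (3 / 13 : ℝ) * (if winsQa f then 0 else 1) +
      (∑ i : ZMod 5, (1 / 13 : ℝ) * (if winsQi f i then 0 else 1)) +
      (∑ i : ZMod 5, (1 / 13 : ℝ) * (if winsQi' f i then 0 else 1)) ≥ 3 / 13 := by
  obtain ⟨e0, e1, e2, e3, e4⟩ := hQ f
  rw [show (∑ i : ZMod 5, (1 / 13 : ℝ) * (if winsQi f i then 0 else 1))
      = ∑ i : Fin 5, (1 / 13 : ℝ) * (if winsQi f i then 0 else 1) from rfl,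
    show (∑ i : ZMod 5, (1 / 13 : ℝ) * (if winsQi' f i then 0 else 1))
      = ∑ i : Fin 5, (1 / 13 : ℝ) * (if winsQi' f i then 0 else 1) from rfl,
    Fin.sum_univ_five, Fin.sum_univ_five]
  have e0' : winsQi f (0 : Fin 5) ↔ _ := e0
  have e1' : winsQi f (1 : Fin 5) ↔ _ := e1
  have e2' : winsQi f (2 : Fin 5) ↔ _ := e2
  have e3' : winsQi f (3 : Fin 5) ↔ _ := e3
  have e4' : winsQi f (4 : Fin 5) ↔ _ := e4
  have h0' : winsQi' f (0 : Fin 5) ↔ _ := hQ0' f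
  have h1' : winsQi' f (1 : Fin 5) ↔ _ := hQ1' f
  have h2' : winsQi' f (2 : Fin 5) ↔ _ := hQ2' f
  have h3' : winsQi' f (3 : Fin 5) ↔ _ := hQ3' f
  have h4' : winsQi' f (4 : Fin 5) ↔ _ := hQ4' f
  simp only [e0', e1', e2', e3', e4', h0', h1', h2', h3', h4']
  simp only [hQa f, e0, e1, e2, e3, e4, hQ0' f, hQ1' f, hQ2' f, hQ3' f, hQ4' f]
  simp only [cast01]
  have key := keyN (f 0 0) (f 1 0) (f 2 0) (f 3 0) (f 4 0)
    (f 0 1) (f 1 1) (f 2 1) (f 3 1) (f 4 1)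
  have key' : (3 : ℝ) ≤ 3 * (if f 0 1 + f 1 1 + f 2 1 + f 3 1 + f 4 1 = 1 then (0:ℕ) else 1)
      + ((if f 4 0 + f 0 1 + f 1 0 = 0 then (0:ℕ) else 1)
        + (if f 0 0 + f 1 1 + f 2 0 = 0 then (0:ℕ) else 1)
        + (if f 1 0 + f 2 1 + f 3 0 = 0 then (0:ℕ) else 1)
        + (if f 2 0 + f 3 1 + f 4 0 = 0 then (0:ℕ) else 1)
        + (if f 3 0 + f 4 1 + f 0 0 = 0 then (0:ℕ) else 1))
      + ((if f 1 1 + (f 2 0 + (f 3 0 + f 4 1)) = 0 then (0:ℕ) else 1)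
        + (if f 0 1 + (f 2 1 + (f 3 0 + f 4 0)) = 0 then (0:ℕ) else 1)
        + (if f 0 0 + (f 1 1 + (f 3 1 + f 4 0)) = 0 then (0:ℕ) else 1)
        + (if f 0 0 + (f 1 0 + (f 2 1 + f 4 1)) = 0 then (0:ℕ) else 1)
        + (if f 0 1 + (f 1 0 + (f 2 0 + f 3 1)) = 0 then (0:ℕ) else 1)) := by
    exact_mod_cast key
  linarith [key']
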